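/- Let A_1,...,A_{n+1} be exchangeable real-valued random variables with almost surely no ties. Define the p-value p = (1/(n+1)) (|{i ≤ n : A_i ≥ A_{n+1}}| + 1). Then for every t ∈ [0,1], P(p ≤ t) ≤ t. -/

import Mathlib

/-!
Let `R j` be the rank of `A j` counted from the top, so that the p-value is `R (n+1) / (n+1)`.
Exchangeability gives every `R j` the same law. Without ties the ranks are distinct numbers in
`{1, …, n+1}`, so at most `m` of them are `≤ m`; summing `P (R j ≤ m)` over `j` yields
`(n+1) P (R (n+1) ≤ m) ≤ m`, and `m = ⌊t (n+1)⌋` gives the claim.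
-/

open MeasureTheory Finset Function
open scoped ENNReal

def upperRank {ι α : Type*} [Fintype ι] [LinearOrder α] (x : ι → α) (j : ι) : ℕ :=
  #{i | x j ≤ x i}

section Combinatorics

variable {ι α : Type*} [Fintype ι] [LinearOrder α]

lemma upperRank_comp_perm (x : ι → α) (σ : Equiv.Perm ι) (j : ι) :
    upperRank (x ∘ σ) j = upperRank x (σ j) :=
  card_bij' (fun i _ => σ i) (fun i _ => σ.symm i) (by simp) (by simp) (by simp) (by simp)

lemma one_le_upperRank (x : ι → α) (j : ι) : 1 ≤ upperRank x j :=
  card_pos.mpr ⟨j, by simp⟩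

lemma upperRank_lt_of_lt {x : ι → α} {j k : ι} (h : x j < x k) :
    upperRank x k < upperRank x j := by
  refine card_lt_card <| (ssubset_iff_of_subset fun i hi => ?_).mpr ⟨j, by simp, by simp [h]⟩
  simp only [mem_filter, mem_univ, true_and] at hi ⊢
  exact h.le.trans hi

lemma upperRank_injective {x : ι → α} (hx : Injective x) : Injective (upperRank x) := by
  intro j k h
  by_contra hjk
  rcases (hx.ne hjk).lt_or_gt with hlt | hlt
  · exact (upperRank_lt_of_lt hlt).ne' h
  · exact (upperRank_lt_of_lt hlt).ne h

lemma card_filter_upperRank_le {x : ι → α} (hx : Injective x) (m : ℕ) :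
    #{j | upperRank x j ≤ m} ≤ m :=
  calc #{j | upperRank x j ≤ m}
      ≤ #(Icc 1 m) := card_le_card_of_injOn (upperRank x)
        (fun j hj => by simpa [one_le_upperRank] using hj) (upperRank_injective hx).injOn
    _ = m := by simp

lemma upperRank_last {n : ℕ} (x : Fin (n + 1) → α) :
    upperRank x (Fin.last n) = #{i : Fin n | x (Fin.last n) ≤ x i.castSucc} + 1 := by
  rw [upperRank, card_filter, card_filter, Fin.sum_univ_castSucc]
  simp

end Combinatorics

open Classical in
lemma sum_measure_le_of_ae_card_le {ι Ω : Type*} [Fintype ι] [MeasurableSpace Ω] {μ : Measure Ω}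
    {s : ι → Set Ω} (hs : ∀ i, MeasurableSet (s i)) {m : ℕ}
    (h : ∀ᵐ ω ∂μ, #{i | ω ∈ s i} ≤ m) : ∑ i, μ (s i) ≤ m * μ Set.univ := by
  calc ∑ i, μ (s i) = ∑ i, ∫⁻ ω, (s i).indicator 1 ω ∂μ := by
        simp_rw [lintegral_indicator_one (hs _)]
    _ = ∫⁻ ω, ∑ i, (s i).indicator 1 ω ∂μ :=
        (lintegral_finsetSum _ fun i _ => measurable_one.indicator (hs i)).symm
    _ = ∫⁻ ω, (#{i | ω ∈ s i} : ℝ≥0∞) ∂μ := by simp [Set.indicator_apply]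
    _ ≤ ∫⁻ _, (m : ℝ≥0∞) ∂μ := lintegral_mono_ae (h.mono fun ω hω => by exact_mod_cast hω)
    _ = m * μ Set.univ := lintegral_const _

section Exchangeable

variable {ι α Ω : Type*} [Fintype ι] [LinearOrder α] [TopologicalSpace α] [OrderClosedTopology α]
  [SecondCountableTopology α] [MeasurableSpace α] [OpensMeasurableSpace α]
  [MeasurableSpace Ω] {μ : Measure Ω} {X : Ω → ι → α}

lemma measurable_upperRank (j : ι) : Measurable fun x : ι → α => upperRank x j := by
  simp_rw [upperRank, card_filter]
  exact Finset.measurable_sum _ fun i _ => Measurable.ite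
    (measurableSet_le (measurable_pi_apply j) (measurable_pi_apply i))
    measurable_const measurable_const

lemma map_upperRank_eq_of_exchangeable (hX : Measurable X)
    (hexch : ∀ σ : Equiv.Perm ι, μ.map (fun ω i => X ω (σ i)) = μ.map X) (j k : ι) :
    μ.map (fun ω => upperRank (X ω) j) = μ.map (fun ω => upperRank (X ω) k) := by
  classical
  have hswap : (fun ω => upperRank (X ω) j) =
      (fun x => upperRank x k) ∘ fun ω i => X ω (Equiv.swap j k i) := by
    ext ω
    rw [comp_apply, ← comp_def (X ω), upperRank_comp_perm, Equiv.swap_apply_right]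
  have hXσ : Measurable fun ω i => X ω (Equiv.swap j k i) := by fun_prop
  rw [hswap, ← Measure.map_map (measurable_upperRank k) hXσ, hexch,
    Measure.map_map (measurable_upperRank k) hX]
  rfl

lemma card_mul_measure_upperRank_le (hX : Measurable X)
    (hexch : ∀ σ : Equiv.Perm ι, μ.map (fun ω i => X ω (σ i)) = μ.map X)
    (hinj : ∀ᵐ ω ∂μ, Injective (X ω)) (j : ι) (m : ℕ) :
    Fintype.card ι * μ {ω | upperRank (X ω) j ≤ m} ≤ m * μ Set.univ := by
  have hrank (k : ι) : Measurable fun ω => upperRank (X ω) k := (measurable_upperRank k).comp hX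
  have hmeas (k : ι) : MeasurableSet {ω | upperRank (X ω) k ≤ m} := hrank k measurableSet_Iic
  have hsame (k : ι) : μ {ω | upperRank (X ω) k ≤ m} = μ {ω | upperRank (X ω) j ≤ m} := by
    have := congrArg (· (Set.Iic m)) (map_upperRank_eq_of_exchangeable hX hexch k j)
    rwa [Measure.map_apply (hrank k) measurableSet_Iic,
      Measure.map_apply (hrank j) measurableSet_Iic] at this
  calc Fintype.card ι * μ {ω | upperRank (X ω) j ≤ m}
      = ∑ k, μ {ω | upperRank (X ω) k ≤ m} := by simp [hsame]
    _ ≤ m * μ Set.univ := sum_measure_le_of_ae_card_le hmeas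
        (hinj.mono fun ω hω => by simpa using card_filter_upperRank_le hω m)

lemma measure_upperRank_div_card_le [IsProbabilityMeasure μ] (hX : Measurable X)
    (hexch : ∀ σ : Equiv.Perm ι, μ.map (fun ω i => X ω (σ i)) = μ.map X)
    (hinj : ∀ᵐ ω ∂μ, Injective (X ω)) (j : ι) {t : ℝ} (ht : 0 ≤ t) :
    μ {ω | (upperRank (X ω) j : ℝ) / Fintype.card ι ≤ t} ≤ ENNReal.ofReal t := by
  have hcard : (0 : ℝ) < Fintype.card ι := by exact_mod_cast Fintype.card_pos_iff.mpr ⟨j⟩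
  set m := ⌊t * Fintype.card ι⌋₊
  have hevent : {ω | (upperRank (X ω) j : ℝ) / Fintype.card ι ≤ t} =
      {ω | upperRank (X ω) j ≤ m} := by
    ext ω
    exact (div_le_iff₀ hcard).trans (Nat.le_floor_iff (by positivity)).symm
  have hbound := card_mul_measure_upperRank_le hX hexch hinj j m
  rw [measure_univ, mul_one] at hbound
  have hbound' : Fintype.card ι * (μ {ω | upperRank (X ω) j ≤ m}).toReal ≤ m := by
    simpa using ENNReal.toReal_mono (by simp) hbound
  have hm : (m : ℝ) ≤ t * Fintype.card ι := Nat.floor_le (by positivity)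
  rw [hevent, ENNReal.le_ofReal_iff_toReal_le (measure_ne_top _ _) ht]
  exact le_of_mul_le_mul_left (by linarith) hcard

end Exchangeable

theorem conformal_pvalue_superuniform_general
    {Ω : Type*} [MeasurableSpace Ω] (P : Measure Ω) [IsProbabilityMeasure P]
    (n : ℕ) (A : Fin (n + 1) → Ω → ℝ)
    (hmeas : ∀ i, Measurable (A i))
    (hexch : ∀ σ : Equiv.Perm (Fin (n + 1)),
      Measure.map (fun ω i => A (σ i) ω) P = Measure.map (fun ω i => A i ω) P)
    (hdistinct : P {ω | ∀ i j, i ≠ j → A i ω ≠ A j ω} = 1) :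
    ∀ t ∈ Set.Icc (0 : ℝ) 1,
      P {ω | (1 / (n + 1 : ℝ)) *
          (((Finset.univ.filter
              (fun i : Fin n => A (Fin.last n) ω ≤ A i.castSucc ω)).card : ℝ) + 1) ≤ t}
        ≤ ENNReal.ofReal t := by
  rintro t ⟨ht0, -⟩
  have hX : Measurable fun ω i => A i ω := measurable_pi_lambda _ hmeas
  have hinj : ∀ᵐ ω ∂P, Injective fun i => A i ω := by
    have hT : MeasurableSet {ω | ∀ i j, i ≠ j → A i ω ≠ A j ω} := by measurability
    filter_upwards [(ae_iff_measure_eq hT.nullMeasurableSet).mpr (by rw [hdistinct, measure_univ])]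
      with ω hω i j hij
    by_contra h
    exact hω i j h hij
  have hpvalue (ω : Ω) :
      1 / (n + 1 : ℝ) * (#{i : Fin n | A (Fin.last n) ω ≤ A i.castSucc ω} + 1) =
        upperRank (fun i => A i ω) (Fin.last n) / Fintype.card (Fin (n + 1)) := by
    rw [upperRank_last, Fintype.card_fin]
    push_cast
    ring
  simp_rw [hpvalue]
  exact measure_upperRank_div_card_le hX hexch hinj (Fin.last n) ht0

theorem conformal_pvalue_superuniform
    {Ω : Type*} [MeasurableSpace Ω] (P : Measure Ω) [IsProbabilityMeasure P]
    (n : ℕ) (hn : 0 < n) (A : Fin (n + 1) → Ω → ℝ)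
    (hmeas : ∀ i, Measurable (A i))
    (hexch : ∀ σ : Equiv.Perm (Fin (n + 1)),
      Measure.map (fun ω i => A (σ i) ω) P = Measure.map (fun ω i => A i ω) P)
    (hdistinct : P {ω | ∀ i j, i ≠ j → A i ω ≠ A j ω} = 1) :
    ∀ t ∈ Set.Icc (0 : ℝ) 1,
      P {ω | (1 / (n + 1 : ℝ)) *
          (((Finset.univ.filter
              (fun i : Fin n => A (Fin.last n) ω ≤ A i.castSucc ω)).card : ℝ) + 1) ≤ t}
        ≤ ENNReal.ofReal t :=
  conformal_pvalue_superuniform_general P n A hmeas hexch hdistinct
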